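/- The multiplicative update of the activation matrix does not increase the data-fit cost: with all entries of z, t, v strictly positive and c entrywise nonnegative, define v'(j,k) = v(j,k) · ( ∑_{a,i} c(a,i,j)·z(a,k)·t(i,k)/m(a,i,j) ) / ( ∑_{a,i} z(a,k)·t(i,k) ). If all entries v'(j,k) are strictly positive, then ∑_{a,i,j} D(c(a,i,j) | ∑_{k} z(a,k)·t(i,k)·v'(j,k)) ≤ ∑_{a,i,j} D(c(a,i,j) | m(a,i,j)). -/

import Mathlib

open Finset Real

/-- Generalized Kullback–Leibler divergence `D(b|a) = b·log(b/a) + a − b`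
(with the convention `0·log 0 = 0`, automatic since `Real.log 0 = 0`). -/
noncomputable def klD (q a : ℝ) : ℝ := q * Real.log (q / a) + a - q

/-- NTF model `m(a,i,j) = ∑ k, z(a,k)·t(i,k)·v(j,k)`. -/
noncomputable def ntfModel {A I J K : ℕ}
    (z : Fin A → Fin K → ℝ) (t : Fin I → Fin K → ℝ) (v : Fin J → Fin K → ℝ)
    (a : Fin A) (i : Fin I) (j : Fin J) : ℝ :=
  ∑ k, z a k * t i k * v j k

/-- Regularized cost
`J(z,t,v,b) = ∑_{a,i,j} D(c(a,i,j)|m(a,i,j)) + μ·∑_k ∑_a D(p(b(k),a)|z(a,k))`. -/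
noncomputable def ntfCost {A I J K B : ℕ}
    (c : Fin A → Fin I → Fin J → ℝ) (μ : ℝ) (p : Fin B → Fin A → ℝ)
    (z : Fin A → Fin K → ℝ) (t : Fin I → Fin K → ℝ) (v : Fin J → Fin K → ℝ)
    (b : Fin K → Fin B) : ℝ :=
  (∑ a, ∑ i, ∑ j, klD (c a i j) (ntfModel z t v a i j)) +
    μ * ∑ k, ∑ a, klD (p (b k) a) (z a k)

/-!
For each data entry, concavity of the logarithm (Jensen with the posterior weights
`z t v / m`) bounds `D(c | m')` by `D(c | m)` plus a correction term that is separable in `k`.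
Summed over `a, i`, the update rule makes the `(j, k)` part of the correction equal to
`-(∑ z t) · D(v' | v)`, which is nonpositive.
-/

lemma klD_eq_mul_klFun (q : ℝ) {a : ℝ} (ha : a ≠ 0) :
    klD q a = a * InformationTheory.klFun (q / a) := by
  rw [klD, InformationTheory.klFun_apply]
  field_simp

lemma klD_nonneg {q a : ℝ} (hq : 0 ≤ q) (ha : 0 < a) : 0 ≤ klD q a := by
  rw [klD_eq_mul_klFun q ha.ne']
  exact mul_nonneg ha.le (InformationTheory.klFun_nonneg (div_nonneg hq ha.le))

section WeightedSums

variable {ι : Type*} [Fintype ι]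

lemma sum_div_mul_log_le_log_sum_mul_div (p r : ι → ℝ) (hp : ∀ k, 0 < p k)
    (hr : ∀ k, 0 < r k) :
    ∑ k, p k / (∑ l, p l) * log (r k) ≤ log ((∑ k, p k * r k) / ∑ l, p l) := by
  rcases isEmpty_or_nonempty ι with _ | _
  · simp
  have hP : 0 < ∑ l, p l := sum_pos (fun k _ => hp k) univ_nonempty
  have hweights : ∑ k, p k / ∑ l, p l = 1 := by rw [← sum_div, div_self hP.ne']
  have hmean : ∑ k, p k / (∑ l, p l) * r k = (∑ k, p k * r k) / ∑ l, p l := by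
    rw [sum_div]
    exact sum_congr rfl fun k _ => by ring
  rw [← hmean]
  simpa only [smul_eq_mul] using strictConcaveOn_log_Ioi.concaveOn.le_map_sum
    (fun k _ => (div_pos (hp k) hP).le) hweights (fun k _ => Set.mem_Ioi.mpr (hr k))

lemma klD_sum_mul_le (c : ℝ) (hc : 0 ≤ c) (w x x' : ι → ℝ) (hw : ∀ k, 0 < w k)
    (hx : ∀ k, 0 < x k) (hx' : ∀ k, 0 < x' k) :
    klD c (∑ k, w k * x' k) ≤ klD c (∑ k, w k * x k) +
      ∑ k, (w k * (x' k - x k) -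
        c * w k / (∑ l, w l * x l) * x k * log (x' k / x k)) := by
  rcases isEmpty_or_nonempty ι with _ | _
  · simp
  set m := ∑ k, w k * x k
  set m' := ∑ k, w k * x' k
  have hm : 0 < m := sum_pos (fun k _ => mul_pos (hw k) (hx k)) univ_nonempty
  have hm' : 0 < m' := sum_pos (fun k _ => mul_pos (hw k) (hx' k)) univ_nonempty
  have hjensen : ∑ k, w k * x k / m * log (x' k / x k) ≤ log (m' / m) := by
    convert sum_div_mul_log_le_log_sum_mul_div (fun k => w k * x k) (fun k => x' k / x k)
      (fun k => mul_pos (hw k) (hx k)) (fun k => div_pos (hx' k) (hx k)) using 3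
    exact sum_congr rfl fun k _ => by field_simp [(hx k).ne']
  have hcorrection : ∑ k, (w k * (x' k - x k) - c * w k / m * x k * log (x' k / x k)) =
      m' - m - c * ∑ k, w k * x k / m * log (x' k / x k) := by
    simp only [sum_sub_distrib, mul_sub, mul_sum, m, m']
    congr 1
    exact sum_congr rfl fun k _ => by ring
  rw [hcorrection]
  rcases hc.eq_or_lt with rfl | hc
  · simp [klD]
  have hlog : log (c / m') = log (c / m) - log (m' / m) := by
    rw [log_div hc.ne' hm'.ne', log_div hc.ne' hm.ne', log_div hm'.ne' hm.ne']
    ring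
  simp only [klD, hlog]
  nlinarith [mul_le_mul_of_nonneg_left hjensen hc.le]

lemma sum_mul_sub_mul_log_nonpos (w s : ι → ℝ) (hw : ∀ k, 0 ≤ w k) {x x' : ℝ}
    (hx : 0 < x) (hx' : 0 < x') (hupdate : x' = x * (∑ k, s k) / ∑ k, w k) :
    ∑ k, (w k * (x' - x) - s k * x * log (x' / x)) ≤ 0 := by
  have hW : ∑ k, w k ≠ 0 := fun h => hx'.ne' (by rw [hupdate, h, div_zero])
  have hS : x * ∑ k, s k = x' * ∑ k, w k := by rw [hupdate, div_mul_cancel₀ _ hW]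
  calc ∑ k, (w k * (x' - x) - s k * x * log (x' / x))
      = (∑ k, w k) * (x' - x) - (x * ∑ k, s k) * log (x' / x) := by
        simp only [sum_sub_distrib, sum_mul, mul_sum]
        congr 1
        exact sum_congr rfl fun k _ => by ring
    _ = -((∑ k, w k) * klD x' x) := by
        rw [hS, klD]
        ring
    _ ≤ 0 := neg_nonpos.mpr (mul_nonneg (sum_nonneg fun k _ => hw k) (klD_nonneg hx'.le hx))

end WeightedSums

/-- The multiplicative update of the activation matrix does not increase the
data-fit cost. -/
theorem stmt4 (A I J K : ℕ)
    (z : Fin A → Fin K → ℝ) (t : Fin I → Fin K → ℝ) (v : Fin J → Fin K → ℝ)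
    (hz : ∀ a k, 0 < z a k) (ht : ∀ i k, 0 < t i k) (hv : ∀ j k, 0 < v j k)
    (c : Fin A → Fin I → Fin J → ℝ) (hc : ∀ a i j, 0 ≤ c a i j)
    (v' : Fin J → Fin K → ℝ)
    (hv'def : ∀ j k, v' j k =
      v j k * (∑ a, ∑ i, c a i j * z a k * t i k / ntfModel z t v a i j) /
        (∑ a, ∑ i, z a k * t i k))
    (hv' : ∀ j k, 0 < v' j k) :
    ∑ a, ∑ i, ∑ j, klD (c a i j) (ntfModel z t v' a i j) ≤
      ∑ a, ∑ i, ∑ j, klD (c a i j) (ntfModel z t v a i j) := by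
  set T : Fin A → Fin I → Fin J → Fin K → ℝ := fun a i j k =>
    z a k * t i k * (v' j k - v j k) -
      c a i j * z a k * t i k / ntfModel z t v a i j * v j k * log (v' j k / v j k)
  have hbound : ∀ a i j, klD (c a i j) (ntfModel z t v' a i j) ≤
      klD (c a i j) (ntfModel z t v a i j) + ∑ k, T a i j k := fun a i j => by
    simpa only [← mul_assoc, ntfModel, T] using klD_sum_mul_le (c a i j) (hc a i j)
      (fun k => z a k * t i k) (v j) (v' j) (fun k => mul_pos (hz a k) (ht i k)) (hv j) (hv' j)
  have hT : ∀ j k, ∑ a, ∑ i, T a i j k ≤ 0 := fun j k => by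
    simpa only [Fintype.sum_prod_type] using sum_mul_sub_mul_log_nonpos
      (fun p : Fin A × Fin I => z p.1 k * t p.2 k)
      (fun p => c p.1 p.2 j * z p.1 k * t p.2 k / ntfModel z t v p.1 p.2 j)
      (fun p => (mul_pos (hz p.1 k) (ht p.2 k)).le) (hv j k) (hv' j k)
      (by simpa only [Fintype.sum_prod_type] using hv'def j k)
  have hswap : ∑ a, ∑ i, ∑ j, ∑ k, T a i j k = ∑ j, ∑ k, ∑ a, ∑ i, T a i j k := by
    simp_rw [sum_comm (γ := Fin J), sum_comm (γ := Fin K)]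
  calc ∑ a, ∑ i, ∑ j, klD (c a i j) (ntfModel z t v' a i j)
      ≤ ∑ a, ∑ i, ∑ j, (klD (c a i j) (ntfModel z t v a i j) + ∑ k, T a i j k) :=
        sum_le_sum fun a _ => sum_le_sum fun i _ => sum_le_sum fun j _ => hbound a i j
    _ = ∑ a, ∑ i, ∑ j, klD (c a i j) (ntfModel z t v a i j) +
          ∑ j, ∑ k, ∑ a, ∑ i, T a i j k := by
        simp only [sum_add_distrib, hswap]
    _ ≤ ∑ a, ∑ i, ∑ j, klD (c a i j) (ntfModel z t v a i j) :=
        add_le_of_nonpos_right (sum_nonpos fun j _ => sum_nonpos fun k _ => hT j k)
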